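/- Every g-dimensional complex subspace E of ℂ^{2g} = ℂ^g × ℂ^g on which the Hermitian form q is positive definite is the graph of a unique g×g complex matrix W, i.e. there exists a unique W with E = {(v, Wv) : v ∈ ℂ^g}, and this W satisfies that I_g − Wᴴ·W is positive definite. -/

import Mathlib

open Matrix
open scoped ComplexOrder

/-- The Hermitian form of signature `(g,g)` on `ℂ^g × ℂ^g`:
`q(z,w) = ∑ conj(z₁ᵢ)·w₁ᵢ − ∑ conj(z₂ᵢ)·w₂ᵢ`. -/
noncomputable def qForm (g : ℕ) (z w : (Fin g → ℂ) × (Fin g → ℂ)) : ℂ :=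
  ∑ i, (starRingEnd ℂ) (z.1 i) * w.1 i - ∑ i, (starRingEnd ℂ) (z.2 i) * w.2 i

/-- The graph `E_W = {(v, W·v) : v ∈ ℂ^g}` of a `g×g` complex matrix `W`,
as a complex subspace of `ℂ^g × ℂ^g`. -/
noncomputable def graphSub (g : ℕ) (W : Matrix (Fin g) (Fin g) ℂ) :
    Submodule ℂ ((Fin g → ℂ) × (Fin g → ℂ)) :=
  LinearMap.range (LinearMap.prod LinearMap.id W.mulVecLin)

/-! A subspace of `ℂ^g × ℂ^g` meeting `0 × ℂ^g` only in `0` projects injectively, hence (having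
dimension `g`) bijectively, onto the first factor, so it is the graph of a linear map. On a
`q`-positive subspace this holds because `q(0, w) = -‖w‖² ≤ 0`. On the graph of `W`,
`q((v, Wv), (v, Wv)) = vᴴ (I - WᴴW) v`, so positivity of `q` there is positivity of `I - WᴴW`. -/

theorem LinearMap.graph_injective {R M M₂ : Type*} [Semiring R] [AddCommMonoid M]
    [AddCommMonoid M₂] [Module R M] [Module R M₂] :
    Function.Injective (LinearMap.graph : (M →ₗ[R] M₂) → Submodule R (M × M₂)) := by
  intro f f' h
  ext x
  have hx : (x, f x) ∈ f'.graph := h ▸ (f.mem_graph_iff (x, f x)).2 rfl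
  exact hx

theorem Submodule.exists_eq_graph_of_finrank_eq {K V U : Type*} [Field K] [AddCommGroup V]
    [Module K V] [FiniteDimensional K V] [AddCommGroup U] [Module K U]
    {E : Submodule K (V × U)} (hfst : ∀ z ∈ E, z.1 = 0 → z = 0)
    (hdim : Module.finrank K E = Module.finrank K V) :
    ∃ f : V →ₗ[K] U, E = f.graph := by
  let p : E →ₗ[K] V := (LinearMap.fst K V U).comp E.subtype
  have hinj : Function.Injective p := by
    rw [← LinearMap.ker_eq_bot, Submodule.eq_bot_iff]
    rintro ⟨z, hz⟩ hz1
    exact Subtype.ext (hfst z hz hz1)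
  have : FiniteDimensional K E := Module.Finite.of_injective p hinj
  exact E.exists_eq_graph
    ⟨hinj, (LinearMap.injective_iff_surjective_of_finrank_eq_finrank hdim).1 hinj⟩

theorem graphSub_eq_graph (g : ℕ) (W : Matrix (Fin g) (Fin g) ℂ) :
    graphSub g W = (Matrix.toLin' W).graph := by
  rw [LinearMap.graph_eq_range_prod]
  rfl

theorem qForm_self (g : ℕ) (z : (Fin g → ℂ) × (Fin g → ℂ)) :
    qForm g z z = star z.1 ⬝ᵥ z.1 - star z.2 ⬝ᵥ z.2 :=
  rfl

theorem qForm_self_nonpos_of_fst_eq_zero {g : ℕ} {z : (Fin g → ℂ) × (Fin g → ℂ)}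
    (hz : z.1 = 0) : qForm g z z ≤ 0 := by
  rw [qForm_self, hz, dotProduct_zero, zero_sub, neg_nonpos]
  exact dotProduct_star_self_nonneg z.2

theorem im_qForm_self (g : ℕ) (z : (Fin g → ℂ) × (Fin g → ℂ)) : (qForm g z z).im = 0 := by
  rw [qForm_self, Complex.sub_im, ← (Complex.le_def.1 (dotProduct_star_self_nonneg z.1)).2,
    ← (Complex.le_def.1 (dotProduct_star_self_nonneg z.2)).2, sub_self]

theorem qForm_graph_self {g : ℕ} (W : Matrix (Fin g) (Fin g) ℂ) (v : Fin g → ℂ) :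
    qForm g (v, W *ᵥ v) (v, W *ᵥ v) = star v ⬝ᵥ ((1 - Wᴴ * W) *ᵥ v) := by
  rw [qForm_self, sub_mulVec, one_mulVec, dotProduct_sub, ← mulVec_mulVec,
    dotProduct_mulVec (star v) Wᴴ, ← star_mulVec]

theorem positive_subspace_is_graph_general (g : ℕ)
    (E : Submodule ℂ ((Fin g → ℂ) × (Fin g → ℂ)))
    (hdim : Module.finrank ℂ E = g)
    (hpos : ∀ v : (Fin g → ℂ) × (Fin g → ℂ), v ∈ E → v ≠ 0 → 0 < (qForm g v v).re) :
    (∃! W : Matrix (Fin g) (Fin g) ℂ, graphSub g W = E) ∧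
    (∀ W : Matrix (Fin g) (Fin g) ℂ, graphSub g W = E → (1 - Wᴴ * W).PosDef) := by
  have hfst : ∀ z ∈ E, z.1 = 0 → z = 0 := fun z hz hz1 => by
    by_contra hz0
    exact (hpos z hz hz0).not_ge (Complex.le_def.1 (qForm_self_nonpos_of_fst_eq_zero hz1)).1
  obtain ⟨f, rfl⟩ := E.exists_eq_graph_of_finrank_eq hfst (by simpa using hdim)
  refine ⟨⟨LinearMap.toMatrix' f, by simp [graphSub_eq_graph], fun W hW => ?_⟩, fun W hW => ?_⟩
  · rw [← LinearMap.graph_injective ((graphSub_eq_graph g W).symm.trans hW),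
      LinearMap.toMatrix'_toLin']
  · refine posDef_iff_dotProduct_mulVec.2
      ⟨isHermitian_one.sub (isHermitian_conjTranspose_mul_self W), fun v hv => ?_⟩
    have hmem : (v, W *ᵥ v) ∈ f.graph := by
      rw [← hW, graphSub_eq_graph]
      rfl
    rw [← qForm_graph_self, Complex.lt_def]
    exact ⟨hpos _ hmem (fun h => hv (congrArg Prod.fst h)), (im_qForm_self g _).symm⟩

/-- Every `g`-dimensional subspace `E ⊆ ℂ^{2g}` on which `q` is positive definite is
the graph of a unique `g×g` matrix `W`, and this `W` satisfies `I_g − Wᴴ·W > 0`. -/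
theorem positive_subspace_is_graph (g : ℕ) (hg : 1 ≤ g)
    (E : Submodule ℂ ((Fin g → ℂ) × (Fin g → ℂ)))
    (hdim : Module.finrank ℂ E = g)
    (hpos : ∀ v : (Fin g → ℂ) × (Fin g → ℂ), v ∈ E → v ≠ 0 → 0 < (qForm g v v).re) :
    (∃! W : Matrix (Fin g) (Fin g) ℂ, graphSub g W = E) ∧
    (∀ W : Matrix (Fin g) (Fin g) ℂ, graphSub g W = E → (1 - Wᴴ * W).PosDef) :=
  positive_subspace_is_graph_general g E hdim hpos
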